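/- Let x > 0 be real. For all sequences (n_j) of even positive integers and (w_j) of positive integers with n_j → ∞ and √(n_j)/w_j → x as j → ∞, one has lim_{j→∞} n_j^{1/2} · 2^{−n_j} · Z_{n_j, w_j}(2,2) = x · Σ_{k∈ℤ} e^{−π²k²x²/2}. -/

import Mathlib

/-- A loop of length `n` in the slit of width `w`: a nearest-neighbour path of heights
`h 0, …, h n` with `h 0 = h n = 0` and all heights in `{0, …, w}` (enforced by taking
values in `Fin (w+1)`). -/
def IsLoop {n w : ℕ} (h : Fin (n + 1) → Fin (w + 1)) : Prop :=
  h 0 = 0 ∧ h (Fin.last n) = 0 ∧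
    ∀ i : Fin n, |((h i.succ : ℤ) - (h i.castSucc : ℤ))| = 1

instance {n w : ℕ} (h : Fin (n + 1) → Fin (w + 1)) : Decidable (IsLoop h) := by
  unfold IsLoop; infer_instance

/-- The partition function of loops,
`Z_{n,w}(a,b) = Σ_h a^{u(h)} b^{v(h)}`, where `u(h)` counts visits to the bottom wall
(excluding the zeroth vertex) and `v(h)` counts visits to the top wall. -/
noncomputable def Z (n w : ℕ) (a b : ℝ) : ℝ :=
  ∑ h : Fin (n + 1) → Fin (w + 1),
    if IsLoop h then
      a ^ (Finset.univ.filter fun i : Fin (n + 1) => i ≠ 0 ∧ (h i : ℕ) = 0).card *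
      b ^ (Finset.univ.filter fun i : Fin (n + 1) => (h i : ℕ) = w).card
    else 0
open Filter

/-!
`Z_{n,w}(2,2)` is the `(0,0)` entry of the `n`-th power of the transfer matrix of the slit.
Its left eigenvectors are the cosine modes `y ↦ cos (π r y / w)`, with eigenvalues
`2 cos (π r / w)`, and expanding `δ₀` in the modes `r < 2w` gives the exact formula
`Z_{n,w}(2,2) = (2w)⁻¹ ∑_{r < 2w} (2 cos (π r / w))^n`. For even `n` the summand is
`w`-periodic in `r`, so `n^{1/2} 2^{-n} Z_{n,w}(2,2) = (√n / w) ∑_{k ∈ K_w} cos (π k / w)^n`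
for a window `K_w` of `w` consecutive integers with `2|k| ≤ w`. Since
`n (π k / w)² → π² k² x²`, each term tends to `exp (-π² k² x² / 2)`, and the bound
`cos t ≤ exp (-2 t² / π²)` on `[-π/2, π/2]` dominates the terms by `exp (-x² k²)`, so the
limit passes through the series by dominated convergence.
-/

open Real Topology
open scoped Matrix

theorem Matrix.pow_apply_eq_sum_paths {ι R : Type*} [Fintype ι] [DecidableEq ι] [CommSemiring R]
    (M : Matrix ι ι R) (n : ℕ) (i j : ι) :
    (M ^ n) i j = ∑ p : Fin (n + 1) → ι,
      if p 0 = i ∧ p (Fin.last n) = j then ∏ k : Fin n, M (p k.castSucc) (p k.succ) else 0 := by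
  induction n generalizing i with
  | zero =>
    rw [← (Equiv.funUnique (Fin 1) ι).symm.sum_comp]
    simp [Matrix.one_apply, Fin.last, ite_and]
  | succ n ih =>
    rw [pow_succ', Matrix.mul_apply, ← (Fin.consEquiv fun _ => ι).sum_comp,
      Fintype.sum_prod_type, Finset.sum_comm]
    simp only [ih, Finset.mul_sum, Fin.consEquiv_apply, Fin.cons_zero, Fin.prod_univ_succ,
      Fin.castSucc_zero, Fin.cons_succ, ← Fin.succ_castSucc, Fin.cons_last]
    rw [Finset.sum_comm]
    simp [ite_and, mul_ite]

def wallWeight (w : ℕ) (a b : ℝ) (z : Fin (w + 1)) : ℝ :=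
  (if (z : ℕ) = 0 then a else 1) * (if (z : ℕ) = w then b else 1)

def transferMatrix (w : ℕ) (a b : ℝ) : Matrix (Fin (w + 1)) (Fin (w + 1)) ℝ :=
  fun y z => if |(z : ℤ) - y| = 1 then wallWeight w a b z else 0

theorem loopWeight_eq_prod_wallWeight {n w : ℕ} (hw : 0 < w) (a b : ℝ)
    {h : Fin (n + 1) → Fin (w + 1)} (h0 : h 0 = 0) :
    a ^ (Finset.univ.filter fun i : Fin (n + 1) => i ≠ 0 ∧ (h i : ℕ) = 0).card *
      b ^ (Finset.univ.filter fun i : Fin (n + 1) => (h i : ℕ) = w).card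
    = ∏ k : Fin n, wallWeight w a b (h k.succ) := by
  have hw0 : (h 0 : ℕ) ≠ w := by rw [h0]; exact hw.ne
  simp only [wallWeight, Finset.prod_mul_distrib, Finset.prod_ite, Finset.prod_const, one_pow,
    mul_one, Fin.card_filter_univ_succ, ne_eq, not_true_eq_false, false_and, if_false, hw0,
    Fin.succ_ne_zero, not_false_eq_true, true_and]

theorem Z_eq_transferMatrix_pow_apply {w : ℕ} (hw : 0 < w) (n : ℕ) (a b : ℝ) :
    Z n w a b = (transferMatrix w a b ^ n) 0 0 := by
  rw [Matrix.pow_apply_eq_sum_paths, Z]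
  refine Finset.sum_congr rfl fun h _ => ?_
  simp only [transferMatrix, Finset.prod_ite_zero, Finset.mem_univ, true_implies, IsLoop]
  by_cases h0 : h 0 = 0
  · simp only [h0, true_and, loopWeight_eq_prod_wallWeight hw a b h0, ite_and]
  · simp [h0]

theorem Fin.sum_ite_intCast_eq {M : Type*} [AddCommMonoid M] (w : ℕ) (g : ℤ → M) (m : ℤ) :
    ∑ y : Fin (w + 1), (if (y : ℤ) = m then g y else 0) = if 0 ≤ m ∧ m ≤ w then g m else 0 := by
  split_ifs with hm
  · have hy : ∀ y : Fin (w + 1), (y : ℤ) = m ↔ y = ⟨m.toNat, by omega⟩ := fun y => by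
      simp only [Fin.ext_iff]; omega
    simp only [hy, Finset.sum_ite_eq', Finset.mem_univ, if_true]
    congr; omega
  · exact Finset.sum_eq_zero fun y _ => if_neg (by omega)

/-- The wall weights `2` act as reflections: summing `g` over the neighbours of `z` inside the
slit gives the free two-neighbour sum of the even, `2w`-periodic extension of `g`. -/
theorem sum_mul_transferMatrix_two_two {w : ℕ} (hw : 0 < w) {g : ℤ → ℝ}
    (hg₀ : g (-1) = g 1) (hg_w : g (w + 1) = g (w - 1)) (z : Fin (w + 1)) :
    ∑ y : Fin (w + 1), g y * transferMatrix w 2 2 y z = g (z - 1) + g (z + 1) := by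
  set c := wallWeight w 2 2 z with hc
  calc ∑ y : Fin (w + 1), g y * transferMatrix w 2 2 y z
      = ∑ y : Fin (w + 1), ((if (y : ℤ) = z - 1 then c * g y else 0)
          + (if (y : ℤ) = z + 1 then c * g y else 0)) := by
        refine Finset.sum_congr rfl fun y _ => ?_
        simp only [transferMatrix, abs_eq zero_le_one]
        split_ifs <;> first | omega | ring
    _ = (if 0 ≤ (z : ℤ) - 1 then c * g (z - 1) else 0)
          + (if (z : ℤ) + 1 ≤ w then c * g (z + 1) else 0) := by
        rw [Finset.sum_add_distrib, Fin.sum_ite_intCast_eq w (fun m => c * g m),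
          Fin.sum_ite_intCast_eq w (fun m => c * g m)]
        have := z.isLt
        congr 1 <;> congr 1 <;> simp only [eq_iff_iff] <;> omega
    _ = g (z - 1) + g (z + 1) := by
        have hw1 : 1 ≤ w := hw
        rcases Nat.eq_zero_or_pos (z : ℕ) with hz | hz
        · simp [hc, wallWeight, hz, hw1, hw.ne, hg₀, two_mul]
        rcases (Nat.lt_succ_iff.1 z.isLt).lt_or_eq with hz' | hz'
        · simp [hc, wallWeight, Nat.one_le_iff_ne_zero.2 hz.ne', hz.ne', hz'.ne, hz']
        · simp [hc, wallWeight, hz', hw1, hw.ne', hg_w, two_mul]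

theorem Matrix.vecMul_pow_of_vecMul_eq_smul {ι R : Type*} [Fintype ι] [DecidableEq ι]
    [Semiring R] {M : Matrix ι ι R} {v : ι → R} {μ : R} (hv : v ᵥ* M = μ • v) (n : ℕ) :
    v ᵥ* M ^ n = μ ^ n • v := by
  induction n with
  | zero => simp
  | succ n ih => rw [pow_succ, ← Matrix.vecMul_vecMul, ih, Matrix.smul_vecMul, hv, smul_smul,
      pow_succ]

noncomputable def cosineMode (w r : ℕ) (y : Fin (w + 1)) : ℝ :=
  cos (π * r * y / w)

theorem cosineMode_vecMul_transferMatrix {w : ℕ} (hw : 0 < w) (r : ℕ) :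
    cosineMode w r ᵥ* transferMatrix w 2 2 = (2 * cos (π * r / w)) • cosineMode w r := by
  have hw0 : (w : ℝ) ≠ 0 := by positivity
  ext z
  have key := sum_mul_transferMatrix_two_two hw (g := fun m : ℤ => cos (π * r * m / w))
    (by simp only [Int.cast_neg, Int.cast_one, mul_neg, neg_div, cos_neg])
    (by
      have : π * r * ((w + 1 : ℤ) : ℝ) / w = r * (2 * π) - π * r * ((w - 1 : ℤ) : ℝ) / w := by
        push_cast; field_simp; ring
      rw [this, cos_nat_mul_two_pi_sub]) z
  simp only [Int.cast_natCast, Int.cast_sub, Int.cast_add, Int.cast_one] at key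
  rw [Matrix.vecMul, dotProduct, Pi.smul_apply, smul_eq_mul]
  simp only [cosineMode, key]
  rw [mul_sub, mul_add, sub_div, add_div, mul_one, cos_sub, cos_add]
  ring

theorem sum_range_cos_two_pi_mul_div_eq_zero {N m : ℕ} (h : ¬ N ∣ m) :
    ∑ r ∈ Finset.range N, cos (2 * π * r * m / N) = 0 := by
  rcases eq_or_ne N 0 with rfl | hN
  · simp
  set ζ := Complex.exp (2 * π * Complex.I / N) ^ m
  have hζ : ζ ≠ 1 := ((Complex.isPrimitiveRoot_exp N hN).pow_eq_one_iff_dvd m).not.2 h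
  have hζN : ζ ^ N = 1 := by
    rw [← pow_mul, mul_comm m N, pow_mul, (Complex.isPrimitiveRoot_exp N hN).pow_eq_one, one_pow]
  have hre : ∀ r : ℕ, cos (2 * π * r * m / N) = (ζ ^ r).re := fun r => by
    rw [← pow_mul, ← Complex.exp_nat_mul, ← Complex.exp_ofReal_mul_I_re]
    push_cast
    ring_nf
  simp only [hre, ← Complex.re_sum, geom_sum_eq hζ, hζN, sub_self, zero_div, Complex.zero_re]

theorem sum_range_cosineMode {w : ℕ} (hw : 0 < w) (y : Fin (w + 1)) :
    ∑ r ∈ Finset.range (2 * w), cosineMode w r y = if y = 0 then 2 * (w : ℝ) else 0 := by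
  split_ifs with hy
  · simp [cosineMode, hy]
  · have hdvd : ¬ 2 * w ∣ (y : ℕ) := fun hd =>
      hy (Fin.ext (Nat.eq_zero_of_dvd_of_lt hd (by omega)))
    rw [← sum_range_cos_two_pi_mul_div_eq_zero hdvd]
    refine Finset.sum_congr rfl fun r _ => ?_
    rw [cosineMode]
    congr 1
    push_cast
    field_simp

theorem single_zero_eq_sum_cosineMode {w : ℕ} (hw : 0 < w) :
    Pi.single 0 1 = (2 * (w : ℝ))⁻¹ • ∑ r ∈ Finset.range (2 * w), cosineMode w r := by
  ext y
  rw [Pi.smul_apply, Finset.sum_apply, sum_range_cosineMode hw, smul_eq_mul, Pi.single_apply]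
  split_ifs
  · field_simp
  · simp

theorem Z_two_two_eq_sum_range_cos_pow {w : ℕ} (hw : 0 < w) (n : ℕ) :
    Z n w 2 2 = (2 * (w : ℝ))⁻¹ * ∑ r ∈ Finset.range (2 * w), (2 * cos (π * r / w)) ^ n := by
  have hmode : ∀ r, (cosineMode w r ᵥ* transferMatrix w 2 2 ^ n) 0 = (2 * cos (π * r / w)) ^ n :=
    fun r => by
      simp [Matrix.vecMul_pow_of_vecMul_eq_smul (cosineMode_vecMul_transferMatrix hw r), cosineMode]
  rw [Z_eq_transferMatrix_pow_apply hw, ← Matrix.row_apply (transferMatrix w 2 2 ^ n) 0,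
    ← Matrix.single_one_vecMul, single_zero_eq_sum_cosineMode hw, Matrix.smul_vecMul,
    Matrix.sum_vecMul, Pi.smul_apply, Finset.sum_apply, smul_eq_mul]
  simp only [hmode]

noncomputable def centeredIco (w : ℕ) : Finset ℤ :=
  Finset.Ico (-((w : ℤ) / 2)) (w - (w : ℤ) / 2)

theorem Function.Periodic.sum_range_eq_sum_centeredIco {M : Type*} [AddCommMonoid M]
    {f : ℤ → M} {w : ℕ} (hf : Function.Periodic f w) :
    ∑ r ∈ Finset.range w, f r = ∑ k ∈ centeredIco w, f k := by
  refine Finset.sum_nbij' (fun r : ℕ => if (r : ℤ) < w - (w : ℤ) / 2 then (r : ℤ) else r - w)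
    (fun k => if 0 ≤ k then k.toNat else (k + w).toNat) ?_ ?_ ?_ ?_ ?_
  · intro r hr
    simp only [centeredIco, Finset.mem_range, Finset.mem_Ico] at hr ⊢
    split_ifs <;> omega
  · intro k hk
    simp only [centeredIco, Finset.mem_range, Finset.mem_Ico] at hk ⊢
    split_ifs <;> omega
  · intro r hr
    simp only [Finset.mem_range] at hr
    split_ifs <;> omega
  · intro k hk
    simp only [centeredIco, Finset.mem_Ico] at hk
    split_ifs <;> omega
  · intro r _
    split_ifs
    · rfl
    · exact (hf.sub_eq _).symm

theorem Function.Periodic.sum_range_two_mul {M : Type*} [AddCommMonoid M] {f : ℤ → M} {w : ℕ}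
    (hf : Function.Periodic f w) :
    ∑ r ∈ Finset.range (2 * w), f r = 2 • ∑ r ∈ Finset.range w, f r := by
  rw [two_mul, Finset.sum_range_add, two_nsmul]
  congr 1
  refine Finset.sum_congr rfl fun r _ => ?_
  rw [Nat.cast_add, add_comm, hf]

theorem periodic_cos_pow {n : ℕ} (hn : Even n) {w : ℕ} (hw : 0 < w) :
    Function.Periodic (fun k : ℤ => cos (π * k / w) ^ n) w := fun k => by
  have hw0 : (w : ℝ) ≠ 0 := by positivity
  simp only [Int.cast_add, Int.cast_natCast]
  rw [mul_add, add_div, mul_div_assoc π (w : ℝ), div_self hw0, mul_one, cos_add_pi, hn.neg_pow]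

noncomputable def foldedCosPow (n w : ℕ) (k : ℤ) : ℝ :=
  if k ∈ centeredIco w then cos (π * k / w) ^ n else 0

theorem Z_two_two_eq_mul_tsum_foldedCosPow {n w : ℕ} (hn : Even n) (hw : 0 < w) :
    Z n w 2 2 = 2 ^ n / w * ∑' k, foldedCosPow n w k := by
  have hf := periodic_cos_pow hn hw
  have hsum : ∑' k, foldedCosPow n w k = ∑ k ∈ centeredIco w, cos (π * k / w) ^ n :=
    (tsum_eq_sum fun k hk => if_neg hk).trans (Finset.sum_congr rfl fun k hk => if_pos hk)
  have hcast : ∀ r : ℕ, cos (π * r / w) ^ n = (fun k : ℤ => cos (π * k / w) ^ n) r :=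
    fun r => by simp
  simp only [Z_two_two_eq_sum_range_cos_pow hw, mul_pow, ← Finset.mul_sum, hcast,
    hf.sum_range_two_mul, hf.sum_range_eq_sum_centeredIco, hsum, nsmul_eq_mul, Nat.cast_ofNat]
  field_simp

theorem cos_pow_le_exp_neg_mul_sq {t : ℝ} (ht : |t| ≤ π / 2) (n : ℕ) :
    cos t ^ n ≤ exp (-(2 / π ^ 2 * t ^ 2 * n)) := by
  have hcos : 0 ≤ cos t := cos_nonneg_of_mem_Icc (abs_le.1 ht)
  calc cos t ^ n ≤ exp (-(2 / π ^ 2 * t ^ 2)) ^ n := by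
        refine pow_le_pow_left₀ hcos ?_ n
        linarith [cos_le_one_sub_mul_cos_sq (ht.trans (by linarith [pi_pos])),
          add_one_le_exp (-(2 / π ^ 2 * t ^ 2))]
    _ = exp (-(2 / π ^ 2 * t ^ 2 * n)) := by rw [← exp_nat_mul]; ring_nf

theorem abs_foldedCosPow_le {n w : ℕ} {s : ℝ} (hs : s ≤ n / (w : ℝ) ^ 2) (k : ℤ) :
    |foldedCosPow n w k| ≤ exp (-(2 * s * k ^ 2)) := by
  unfold foldedCosPow
  split_ifs with hk
  · simp only [centeredIco, Finset.mem_Ico] at hk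
    have hw : (0 : ℝ) < w := by exact_mod_cast (show 0 < w by omega)
    have hk2 : 2 * |(k : ℝ)| ≤ w := by
      rw [← Int.cast_abs]; exact_mod_cast (show 2 * |k| ≤ w by cases abs_cases k <;> omega)
    have ht : |π * k / w| ≤ π / 2 := by
      rw [abs_div, abs_mul, abs_of_pos pi_pos, abs_of_pos hw, div_le_iff₀ hw]
      nlinarith [pi_pos]
    rw [abs_of_nonneg (pow_nonneg (cos_nonneg_of_mem_Icc (abs_le.1 ht)) n)]
    refine (cos_pow_le_exp_neg_mul_sq ht n).trans (exp_le_exp.2 ?_)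
    have hnw : 2 / π ^ 2 * (π * k / w) ^ 2 * n = 2 * k ^ 2 * (n / w ^ 2) := by
      field_simp
    rw [hnw, neg_le_neg_iff]
    nlinarith [sq_nonneg (k : ℝ)]
  · simp only [abs_zero]; positivity

theorem summable_exp_neg_mul_sq_int {c : ℝ} (hc : 0 < c) :
    Summable fun k : ℤ => exp (-(c * k ^ 2)) := by
  convert summable_pow_mul_jacobiTheta₂_term_bound 0 (div_pos hc pi_pos) 0 using 2 with k
  field_simp
  ring_nf

theorem tendsto_pow_exp_of_tendsto_mul_sub_one {ι : Type*} {l : Filter ι} {n : ι → ℕ}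
    {u : ι → ℝ} {a : ℝ} (hu : Tendsto u l (𝓝 1))
    (h : Tendsto (fun i => n i * (u i - 1)) l (𝓝 a)) :
    Tendsto (fun i => u i ^ n i) l (𝓝 (exp a)) := by
  have hpos : ∀ᶠ i in l, 0 < u i := hu.eventually (lt_mem_nhds one_pos)
  -- `1 - 1/u ≤ log u ≤ u - 1` squeezes `n log u` between `n (u - 1) / u` and `n (u - 1)`.
  have hlog : Tendsto (fun i => n i * log (u i)) l (𝓝 a) := by
    refine tendsto_of_tendsto_of_tendsto_of_le_of_le' (by simpa using h.div hu one_ne_zero) h ?_ ?_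
    · filter_upwards [hpos] with i hi
      rw [Pi.div_apply, mul_div_assoc]
      refine mul_le_mul_of_nonneg_left ?_ (Nat.cast_nonneg _)
      have := one_sub_inv_le_log_of_pos hi
      rwa [sub_div, div_self hi.ne', one_div]
    · filter_upwards [hpos] with i hi
      exact mul_le_mul_of_nonneg_left (log_le_sub_one_of_pos hi) (Nat.cast_nonneg _)
  refine ((continuous_exp.tendsto a).comp hlog).congr' ?_
  filter_upwards [hpos] with i hi
  rw [Function.comp_apply, exp_nat_mul, exp_log hi]

theorem tendsto_mul_cos_sub_one {ι : Type*} {l : Filter ι} {n : ι → ℕ} {t : ι → ℝ} {c : ℝ}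
    (ht : Tendsto t l (𝓝 0)) (h : Tendsto (fun i => n i * t i ^ 2) l (𝓝 c)) :
    Tendsto (fun i => n i * (cos (t i) - 1)) l (𝓝 (-c / 2)) := by
  -- `cos t - (1 - t²/2) = O(t⁴)`, and `n t⁴ = (n t²) t² → 0`.
  have hrem : Tendsto (fun i => n i * t i ^ 2 * (5 / 96 * t i ^ 2)) l (𝓝 0) := by
    simpa using h.mul ((ht.pow 2).const_mul (5 / 96))
  have herr : Tendsto (fun i => n i * (cos (t i) - (1 - t i ^ 2 / 2))) l (𝓝 0) := by
    refine squeeze_zero_norm' ?_ hrem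
    filter_upwards [ht.eventually (Metric.closedBall_mem_nhds 0 one_pos)] with i hi
    rw [Real.dist_0_eq_abs] at hi
    rw [norm_mul, Real.norm_natCast, Real.norm_eq_abs]
    calc (n i : ℝ) * |cos (t i) - (1 - t i ^ 2 / 2)| ≤ n i * (|t i| ^ 4 * (5 / 96)) :=
          mul_le_mul_of_nonneg_left (cos_bound hi) (Nat.cast_nonneg _)
      _ = n i * t i ^ 2 * (5 / 96 * t i ^ 2) := by
          rw [← abs_pow, abs_of_nonneg (by positivity)]; ring
  have hsum := (h.neg.div_const 2).add herr
  rw [add_zero] at hsum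
  exact hsum.congr fun i => by ring

theorem tendsto_foldedCosPow {ι : Type*} {l : Filter ι} {n w : ι → ℕ} {s : ℝ}
    (hw : Tendsto w l atTop) (hnw : Tendsto (fun i => (n i : ℝ) / (w i : ℝ) ^ 2) l (𝓝 s))
    (k : ℤ) :
    Tendsto (fun i => foldedCosPow (n i) (w i) k) l (𝓝 (exp (-(π ^ 2 * k ^ 2 * s) / 2))) := by
  have ht : Tendsto (fun i => π * k / w i) l (𝓝 0) := by
    simpa [div_eq_mul_inv] using
      ((tendsto_natCast_atTop_atTop.comp hw).inv_tendsto_atTop.const_mul (π * k))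
  have hnt : Tendsto (fun i => n i * (π * k / w i) ^ 2) l (𝓝 (π ^ 2 * k ^ 2 * s)) :=
    (hnw.const_mul (π ^ 2 * k ^ 2)).congr fun i => by ring
  have hcos : Tendsto (fun i => cos (π * k / w i)) l (𝓝 1) := by
    simpa only [cos_zero, Function.comp_def] using (continuous_cos.tendsto 0).comp ht
  refine (tendsto_pow_exp_of_tendsto_mul_sub_one hcos (tendsto_mul_cos_sub_one ht hnt)).congr' ?_
  filter_upwards [hw.eventually (eventually_ge_atTop (2 * k.natAbs + 2))] with i hi
  refine (if_pos ?_).symm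
  simp only [centeredIco, Finset.mem_Ico]
  omega

theorem Z_two_two_scaling_general (x : ℝ) (hx : 0 < x) (n w : ℕ → ℕ)
    (hne : ∀ j, Even (n j))
    (hn : Tendsto n atTop atTop)
    (hx' : Tendsto (fun j => Real.sqrt (n j) / (w j : ℝ)) atTop (nhds x)) :
    Tendsto
      (fun j => (n j : ℝ) ^ ((1 : ℝ) / 2) / 2 ^ (n j) * Z (n j) (w j) 2 2)
      atTop
      (nhds (x * ∑' k : ℤ,
        Real.exp (-(Real.pi ^ 2 * (k : ℝ) ^ 2 * x ^ 2) / 2))) := by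
  have hratio : ∀ᶠ j in atTop, 0 < √(n j) / w j := hx'.eventually (lt_mem_nhds hx)
  have hw : Tendsto w atTop atTop := by
    have hsqrt := tendsto_sqrt_atTop.comp (tendsto_natCast_atTop_atTop.comp hn)
    refine tendsto_natCast_atTop_iff.1 ((hsqrt.atTop_mul_pos (inv_pos.2 hx)
      (hx'.inv₀ hx.ne')).congr' ?_)
    filter_upwards [hratio] with j hj
    rw [Function.comp_apply, Function.comp_apply, inv_div, mul_div_cancel₀]
    exact fun h => by simp [h] at hj
  have hnw : Tendsto (fun j => (n j : ℝ) / (w j : ℝ) ^ 2) atTop (𝓝 (x ^ 2)) :=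
    (hx'.pow 2).congr fun j => by rw [div_pow, sq_sqrt (Nat.cast_nonneg _)]
  have hsum := tendsto_tsum_of_dominated_convergence
    (summable_exp_neg_mul_sq_int (pow_pos hx 2)) (tendsto_foldedCosPow hw hnw) (by
      filter_upwards [hnw.eventually (eventually_ge_nhds (by linarith [pow_pos hx 2] :
        x ^ 2 / 2 < x ^ 2))] with j hj k
      simpa [Real.norm_eq_abs, mul_div_cancel₀] using abs_foldedCosPow_le hj k)
  refine (hx'.mul hsum).congr' ?_
  filter_upwards [hw.eventually (eventually_gt_atTop 0)] with j hj
  rw [Z_two_two_eq_mul_tsum_foldedCosPow (hne j) hj, ← sqrt_eq_rpow]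
  field_simp

/-- finite-size scaling of `Z_{n,w}(2,2)`: along any sequences with
`n_j → ∞`, `n_j` even and `√n_j / w_j → x > 0`, one has
`n_j^{1/2} 2^{−n_j} Z_{n_j,w_j}(2,2) → x Σ_{k∈ℤ} e^{−π²k²x²/2}`. -/
theorem Z_two_two_scaling (x : ℝ) (hx : 0 < x) (n w : ℕ → ℕ)
    (hne : ∀ j, Even (n j)) (hnpos : ∀ j, 0 < n j) (hwpos : ∀ j, 0 < w j)
    (hn : Tendsto n atTop atTop)
    (hx' : Tendsto (fun j => Real.sqrt (n j) / (w j : ℝ)) atTop (nhds x)) :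
    Tendsto
      (fun j => (n j : ℝ) ^ ((1 : ℝ) / 2) / 2 ^ (n j) * Z (n j) (w j) 2 2)
      atTop
      (nhds (x * ∑' k : ℤ,
        Real.exp (-(Real.pi ^ 2 * (k : ℝ) ^ 2 * x ^ 2) / 2))) :=
  Z_two_two_scaling_general x hx n w hne hn hx'
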